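/- arXiv:1107.1467 — 6 statements merged into one kernel-verified Lean document; each statement's English description precedes it below -/
import Mathlib

section
/- For a lossless network (bus admittance matrix Y purely imaginary, with Im(Y) a connected weighted graph Laplacian), the set of achievable real power injection vectors p = Re(diag(v v^H Y^H)) over all complex voltage vectors v ∈ ℂ^n is exactly the hyperplane {p ∈ ℝ^n : ∑_i p_i = 0}. -/
open Matrix

/-- The real power injection vector `p = Re(diag(v v^H Y^H))` of a voltage vector
`v`, whose `i`-th entry is `Re(v_i ⬝ conj((Y v)_i))`. -/
noncomputable def powerInjection {n : ℕ} (Y : Matrix (Fin n) (Fin n) ℂ)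
    (v : Fin n → ℂ) : Fin n → ℝ :=
  fun i => (v i * (starRingEnd ℂ) ((Y *ᵥ v) i)).re

/-!
Write `v = x + i c` with `x c` real. Then `p_i = c_i (B x)_i - x_i (B c)_i`, i.e. `p` is the matrix
`M_c = diag c * B - diag (B c)` applied to `x`, and symmetry of `B` gives
`∑ p_i = cᵀ B x - xᵀ B c = 0`. Conversely `M_c c = 0`, so once `ker M_c` is spanned by `c` the
range of `M_c` has dimension `n - 1` and fills the hyperplane.

Since `B` may have entries of both signs, `c = 1` need not work. Instead `c` is built along the
connected graph one vertex at a time: giving a new boundary vertex `ℓ` the value `γ` keeps the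
kernel spanned by `c` for all but finitely many `γ`, because the linear system that has to be
injective is affine in `γ` and injective at `γ = 0`, thanks to `(B c)_ℓ ≠ 0`.
-/

open Filter Function Finset

theorem LinearMap.eventually_cofinite_injective_add_smul {K V W : Type*} [Field K]
    [AddCommGroup V] [Module K V] [FiniteDimensional K V] [AddCommGroup W] [Module K W]
    {f : V →ₗ[K] W} (g : V →ₗ[K] W) (hf : Injective f) :
    ∀ᶠ γ : K in cofinite, Injective (f + γ • g) := by
  obtain ⟨s, hs⟩ := f.exists_leftInverse_of_injective (LinearMap.ker_eq_bot.mpr hf)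
  -- if `(f + γ • g) y = 0` with `y ≠ 0`, then `y` is an eigenvector of `s ∘ₗ g` for `-γ⁻¹`
  refine ((Module.End.finite_hasEigenvalue (s ∘ₗ g)).image fun μ => -μ⁻¹).subset ?_
  intro γ (hγ : ¬ Injective (f + γ • g))
  rw [← LinearMap.ker_eq_bot] at hγ
  obtain ⟨y, hy, hy0⟩ := Submodule.exists_mem_ne_zero_of_ne_bot hγ
  have hsy : y + γ • (s ∘ₗ g) y = 0 := by
    have hsf : s (f y) = y := LinearMap.congr_fun hs y
    simpa [hsf] using congrArg s (LinearMap.mem_ker.mp hy)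
  have hγ0 : γ ≠ 0 := by rintro rfl; simp_all
  refine ⟨-γ⁻¹, ?_, by simp⟩
  refine Module.End.hasEigenvalue_of_hasEigenvector ⟨?_, hy0⟩
  rw [Module.End.mem_eigenspace_iff]
  have := congrArg (γ⁻¹ • ·) hsy
  simp only [smul_add, smul_smul, inv_mul_cancel₀ hγ0, one_smul, smul_zero] at this
  rw [neg_smul, eq_neg_iff_add_eq_zero, add_comm, this]

theorem SimpleGraph.Connected.exists_adj_mem_notMem {V : Type*} {G : SimpleGraph V}
    (hG : G.Connected) {s : Set V} {u v : V} (hu : u ∈ s) (hv : v ∉ s) :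
    ∃ i ∈ s, ∃ ℓ ∉ s, G.Adj i ℓ := by
  obtain ⟨d, -, hd₁, hd₂⟩ := (hG.preconnected u v).some.exists_boundary_dart s hu hv
  exact ⟨_, hd₁, _, hd₂, d.adj⟩

namespace Matrix

section CommRing

variable {K ι : Type*} [CommRing K] [Fintype ι] [DecidableEq ι]

def injectionMatrix (B : Matrix ι ι K) (c : ι → K) : Matrix ι ι K :=
  diagonal c * B - diagonal (B *ᵥ c)

variable {B : Matrix ι ι K}

theorem injectionMatrix_mulVec_apply (c x : ι → K) (i : ι) :
    (injectionMatrix B c *ᵥ x) i = c i * (B *ᵥ x) i - x i * (B *ᵥ c) i := by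
  simp [injectionMatrix, sub_mulVec, ← mulVec_mulVec, mulVec_diagonal, mul_comm]

theorem injectionMatrix_mulVec_self (c : ι → K) : injectionMatrix B c *ᵥ c = 0 := by
  ext i
  simp [injectionMatrix_mulVec_apply]

theorem injectionMatrix_add_smul (c d : ι → K) (γ : K) :
    injectionMatrix B (c + γ • d) = injectionMatrix B c + γ • injectionMatrix B d := by
  ext i j
  by_cases h : i = j <;> simp [injectionMatrix, h, mulVec_add, mulVec_smul] <;> ring

theorem IsSymm.sum_injectionMatrix_mulVec (hB : B.IsSymm) (c x : ι → K) :
    ∑ i, (injectionMatrix B c *ᵥ x) i = 0 := by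
  simp only [injectionMatrix_mulVec_apply, sum_sub_distrib]
  have : c ⬝ᵥ B *ᵥ x = x ⬝ᵥ B *ᵥ c := by
    rw [dotProduct_mulVec, ← mulVec_transpose, hB.eq, dotProduct_comm]
  simpa [dotProduct, sub_eq_zero, mul_comm] using this

end CommRing

variable {K ι : Type*} [Field K] [Fintype ι] [DecidableEq ι] {B : Matrix ι ι K}

def borderedMap (A : Finset ι) (ℓ : ι) (B M : Matrix ι ι K) : (ι → K) →ₗ[K] (ι → K) × K :=
  (toLin' (of fun i => if i ∈ A then M i else (1 : Matrix ι ι K) i)).prod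
    (LinearMap.proj ℓ ∘ₗ toLin' B)

theorem borderedMap_apply (A : Finset ι) (ℓ : ι) (M : Matrix ι ι K) (y : ι → K) :
    borderedMap A ℓ B M y = (A.piecewise (M *ᵥ y) y, (B *ᵥ y) ℓ) := by
  ext i
  · by_cases hi : i ∈ A <;> simp [borderedMap, hi, mulVec, dotProduct, one_apply]
  · rfl

theorem borderedMap_add_smul (A : Finset ι) (ℓ : ι) (M N : Matrix ι ι K) (γ : K) :
    borderedMap A ℓ B (M + γ • N) =
      borderedMap A ℓ B M + γ • (toLin' (of fun i => if i ∈ A then N i else 0)).prod 0 := by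
  ext y i
  · by_cases hi : i ∈ A <;> simp [borderedMap, hi, mulVec]
  · simp [borderedMap]

structure IsCorankOneOn (B : Matrix ι ι K) (A : Finset ι) (c : ι → K) : Prop where
  support : ∀ i ∉ A, c i = 0
  ker : ∀ x : ι → K, (∀ i ∉ A, x i = 0) → (∀ i ∈ A, (injectionMatrix B c *ᵥ x) i = 0) →
    ∃ t : K, x = t • c
  frontier : ∀ m ∉ A, ∀ i ∈ A, B m i ≠ 0 → (B *ᵥ c) m ≠ 0

theorem isCorankOneOn_singleton (v : ι) : IsCorankOneOn B {v} (Pi.single v 1) where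
  support i hi := by simp_all
  ker x hx _ := ⟨x v, by
    ext i
    by_cases hi : i = v
    · simp [hi]
    · simp [hi, hx i (by simpa using hi)]⟩
  frontier m _ i hi hmi := by simpa [Finset.mem_singleton.mp hi] using hmi

namespace IsCorankOneOn

variable {A : Finset ι} {c : ι → K} {ℓ : ι}

theorem injective_borderedMap (hc : IsCorankOneOn B A c) (hℓ : ℓ ∉ A) {i : ι} (hi : i ∈ A)
    (hℓi : B ℓ i ≠ 0) : Injective (borderedMap A ℓ B (injectionMatrix B c)) := by
  rw [← LinearMap.ker_eq_bot, LinearMap.ker_eq_bot']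
  intro y hy
  rw [borderedMap_apply, Prod.mk_eq_zero] at hy
  obtain ⟨hrows, hℓrow⟩ := hy
  obtain ⟨t, rfl⟩ := hc.ker y (fun i hi => by simpa [hi] using congrFun hrows i)
    (fun i hi => by simpa [hi] using congrFun hrows i)
  have : t * (B *ᵥ c) ℓ = 0 := by simpa [mulVec_smul] using hℓrow
  simp [(mul_eq_zero.mp this).resolve_right (hc.frontier ℓ hℓ i hi hℓi)]

theorem ker_insert (hc : IsCorankOneOn B A c) (hℓ : ℓ ∉ A) {γ : K} (hγ : γ ≠ 0)
    (hinj : Injective (borderedMap A ℓ B (injectionMatrix B (c + γ • Pi.single ℓ 1))))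
    (x : ι → K) (hx : ∀ i ∉ insert ℓ A, x i = 0)
    (hrows : ∀ i ∈ insert ℓ A, (injectionMatrix B (c + γ • Pi.single ℓ 1) *ᵥ x) i = 0) :
    ∃ t : K, x = t • (c + γ • Pi.single ℓ 1) := by
  set c' := c + γ • Pi.single ℓ 1 with hc'
  have hc'ℓ : c' ℓ = γ := by simp [hc', hc.support ℓ hℓ]
  set y := x - (x ℓ / γ) • c' with hy
  have hyℓ : y ℓ = 0 := by simp [hy, hc'ℓ, hγ]
  have hysupp : ∀ i ∉ A, y i = 0 := by
    intro i hi
    by_cases hiℓ : i = ℓ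
    · rw [hiℓ, hyℓ]
    · simp [hy, hc', hx i (by simp [hi, hiℓ]), hc.support i hi, hiℓ]
  have hMy : injectionMatrix B c' *ᵥ y = injectionMatrix B c' *ᵥ x := by
    simp [hy, mulVec_sub, mulVec_smul, injectionMatrix_mulVec_self]
  have hBy : (B *ᵥ y) ℓ = 0 := by
    have := hrows ℓ (mem_insert_self ℓ A)
    rw [← hMy, injectionMatrix_mulVec_apply, hyℓ, hc'ℓ] at this
    simpa [hγ] using this
  have hy0 : y = 0 := by
    refine hinj ?_
    rw [map_zero, borderedMap_apply, hMy, hBy, Prod.mk_eq_zero]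
    refine ⟨?_, rfl⟩
    ext i
    by_cases hi : i ∈ A
    · simp [hi, hrows i (mem_insert_of_mem hi)]
    · simp [hi, hysupp i hi]
  exact ⟨x ℓ / γ, sub_eq_zero.mp hy0⟩

theorem exists_insert [Infinite K] (hc : IsCorankOneOn B A c) (hℓ : ℓ ∉ A) {i : ι}
    (hi : i ∈ A) (hℓi : B ℓ i ≠ 0) :
    ∃ γ : K, IsCorankOneOn B (insert ℓ A) (c + γ • Pi.single ℓ 1) := by
  have hinj := LinearMap.eventually_cofinite_injective_add_smul
    ((toLin' (of fun i => if i ∈ A then injectionMatrix B (Pi.single ℓ 1) i else 0)).prod 0)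
    (hc.injective_borderedMap hℓ hi hℓi)
  have hfront : ∀ᶠ γ : K in cofinite, ∀ m, B m ℓ ≠ 0 → (B *ᵥ c) m + γ * B m ℓ ≠ 0 := by
    rw [eventually_all]
    intro m
    by_cases hm : B m ℓ = 0
    · simp [hm]
    · filter_upwards [eventually_cofinite_ne (-(B *ᵥ c) m / B m ℓ)] with γ hγ
      intro _ h
      exact hγ (by field_simp; linear_combination h)
  obtain ⟨γ, hγ0, hinj, hγfront⟩ := ((eventually_cofinite_ne 0).and (hinj.and hfront)).exists
  rw [← borderedMap_add_smul, ← injectionMatrix_add_smul] at hinj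
  refine ⟨γ, ⟨fun j hj => ?_, hc.ker_insert hℓ hγ0 hinj, fun m hm j hj hBmj => ?_⟩⟩
  · rw [mem_insert, not_or] at hj
    simp [hc.support j hj.2, hj.1]
  · have : (B *ᵥ (c + γ • Pi.single ℓ 1)) m = (B *ᵥ c) m + γ * B m ℓ := by
      simp [mulVec_add, mulVec_smul]
    rw [this]
    by_cases hmℓ : B m ℓ = 0
    · have hjA : j ∈ A := (mem_insert.mp hj).resolve_left (by rintro rfl; exact hBmj hmℓ)
      simpa [hmℓ] using hc.frontier m (fun h => hm (mem_insert_of_mem h)) j hjA hBmj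
    · exact hγfront m hmℓ

end IsCorankOneOn

theorem exists_isCorankOneOn_univ [Infinite K] {G : SimpleGraph ι} (hG : G.Connected)
    (hadj : ∀ i k, G.Adj i k → B i k ≠ 0) : ∃ c, IsCorankOneOn B univ c := by
  classical
  obtain ⟨v⟩ := hG.nonempty
  let S := univ.filter fun A : Finset ι => v ∈ A ∧ ∃ c, IsCorankOneOn B A c
  have hvS : {v} ∈ S := by simpa [S] using ⟨_, isCorankOneOn_singleton v⟩
  obtain ⟨A, hAS, hmax⟩ := S.exists_max_image card ⟨_, hvS⟩
  obtain ⟨hvA, c, hc⟩ := (mem_filter.mp hAS).2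
  by_cases hAu : A = univ
  · exact ⟨c, hAu ▸ hc⟩
  obtain ⟨w, hw⟩ : ∃ w, w ∉ A := by simpa [eq_univ_iff_forall] using hAu
  obtain ⟨i, hi, ℓ, hℓ, hij⟩ := hG.exists_adj_mem_notMem (s := A) hvA hw
  obtain ⟨γ, hγ⟩ := hc.exists_insert hℓ hi (hadj ℓ i hij.symm)
  have := hmax (insert ℓ A) (by simpa [S, hvA] using ⟨_, hγ⟩)
  rw [card_insert_of_notMem hℓ] at this
  omega

theorem IsSymm.exists_injectionMatrix_mulVec_eq (hB : B.IsSymm) {c : ι → K}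
    (hc : ∀ x, injectionMatrix B c *ᵥ x = 0 → ∃ t : K, x = t • c) {p : ι → K}
    (hp : ∑ i, p i = 0) : ∃ x, injectionMatrix B c *ᵥ x = p := by
  rcases isEmpty_or_nonempty ι with _ | ⟨⟨i⟩⟩
  · exact ⟨0, Subsingleton.elim _ _⟩
  let f := toLin' (injectionMatrix B c)
  let s : (ι → K) →ₗ[K] K := ∑ i, LinearMap.proj i
  have hs : ∀ y, s y = ∑ i, y i := fun y => by simp [s]
  have hle : LinearMap.range f ≤ LinearMap.ker s := by
    rintro _ ⟨x, rfl⟩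
    simp [hs, f, hB.sum_injectionMatrix_mulVec]
  have hker : Module.finrank K (LinearMap.ker f) ≤ 1 := by
    refine (Submodule.finrank_mono (s := LinearMap.ker f) (t := K ∙ c) fun x hx => ?_).trans
      ((finrank_span_le_card {c}).trans (by simp))
    obtain ⟨t, rfl⟩ := hc x hx
    exact Submodule.smul_mem _ t (Submodule.mem_span_singleton_self c)
  have hs_lt : Module.finrank K (LinearMap.ker s) < Fintype.card ι := by
    rw [← Module.finrank_fintype_fun_eq_card (R := K)]
    refine Submodule.finrank_lt fun h => ?_
    have : Pi.single i (1 : K) ∈ LinearMap.ker s := h ▸ Submodule.mem_top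
    simp [hs] at this
  have hrange := f.finrank_range_add_finrank_ker
  rw [Module.finrank_fintype_fun_eq_card] at hrange
  have heq := Submodule.eq_of_le_of_finrank_le hle (by omega)
  obtain ⟨x, hx⟩ : p ∈ LinearMap.range f := heq ▸ (by simpa [hs] using hp)
  exact ⟨x, hx⟩

theorem IsSymm.exists_forall_injectionMatrix_mulVec_eq [Infinite K] (hB : B.IsSymm)
    {G : SimpleGraph ι} (hG : G.Connected) (hadj : ∀ i k, G.Adj i k → B i k ≠ 0) :
    ∃ c, ∀ p : ι → K, ∑ i, p i = 0 → ∃ x, injectionMatrix B c *ᵥ x = p := by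
  obtain ⟨c, hc⟩ := exists_isCorankOneOn_univ hG hadj
  exact ⟨c, fun p hp => hB.exists_injectionMatrix_mulVec_eq
    (fun x hx => hc.ker x (by simp) fun i _ => congrFun hx i) hp⟩

end Matrix

theorem powerInjection_eq_injectionMatrix_mulVec {n : ℕ} (B : Matrix (Fin n) (Fin n) ℝ)
    (v : Fin n → ℂ) :
    powerInjection (fun i k => Complex.I * (B i k : ℂ)) v =
      injectionMatrix B (fun i => (v i).im) *ᵥ fun i => (v i).re := by
  ext i
  have hBv : (B.map (↑) *ᵥ v) i = ((B *ᵥ fun k => (v k).re) i : ℂ) +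
      ((B *ᵥ fun k => (v k).im) i : ℂ) * Complex.I := by
    apply Complex.ext <;> simp [mulVec, dotProduct, Complex.re_sum, Complex.im_sum]
  have hYv : ((fun i k => Complex.I * (B i k : ℂ)) *ᵥ v) i = Complex.I * (B.map (↑) *ᵥ v) i := by
    simp [mulVec, dotProduct, mul_sum, mul_assoc]
  simp only [powerInjection]
  rw [hYv, hBv, injectionMatrix_mulVec_apply]
  simp [Complex.mul_re, Complex.mul_im]

theorem lossless_injection_region_general
    (n : ℕ) (G : SimpleGraph (Fin n)) (hconn : G.Connected)
    (B : Matrix (Fin n) (Fin n) ℝ)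
    (hsym : B.IsSymm)
    (hfit : ∀ i k : Fin n, i ≠ k → (B i k ≠ 0 ↔ G.Adj i k))
    (Y : Matrix (Fin n) (Fin n) ℂ)
    (hY : Y = fun i k => Complex.I * (B i k : ℂ)) :
    {p : Fin n → ℝ | ∃ v : Fin n → ℂ, p = powerInjection Y v}
      = {p : Fin n → ℝ | ∑ i, p i = 0} := by
  subst hY
  ext p
  constructor
  · rintro ⟨v, rfl⟩
    rw [powerInjection_eq_injectionMatrix_mulVec]
    exact hsym.sum_injectionMatrix_mulVec _ _
  · intro hp
    obtain ⟨c, hc⟩ := hsym.exists_forall_injectionMatrix_mulVec_eq hconn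
      fun i k h => (hfit i k h.ne).mpr h
    obtain ⟨x, rfl⟩ := hc p hp
    refine ⟨fun i => x i + c i * Complex.I, ?_⟩
    rw [powerInjection_eq_injectionMatrix_mulVec]
    simp

/-- For a lossless network (`Y = j·B` with `B` a real symmetric connected
weighted graph Laplacian), the set of achievable real power injection vectors
`p = Re(diag(v v^H Y^H))` over all complex voltages `v` is exactly the hyperplane
`{p : ∑ i, p i = 0}`. -/
theorem lossless_injection_region
    (n : ℕ) (G : SimpleGraph (Fin n)) (hconn : G.Connected)
    (B : Matrix (Fin n) (Fin n) ℝ)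
    (hsym : B.IsSymm)
    (hfit : ∀ i k : Fin n, i ≠ k → (B i k ≠ 0 ↔ G.Adj i k))
    (hrow : B *ᵥ (fun _ => (1 : ℝ)) = 0)
    (Y : Matrix (Fin n) (Fin n) ℂ)
    (hY : Y = fun i k => Complex.I * (B i k : ℂ)) :
    {p : Fin n → ℝ | ∃ v : Fin n → ℂ, p = powerInjection Y v}
      = {p : Fin n → ℝ | ∑ i, p i = 0} :=
  lossless_injection_region_general n G hconn B hsym hfit Y hY
end

section
/- Let Y be the bus admittance matrix of a lossy network, so G = Re(Y) is a positive semidefinite connected weighted graph Laplacian (G·1 = 0, kernel spanned by 1). Let p^0 ∈ ℝ^n with 1^T p^0 = 0, and let v^0 ∈ ℝ^n be the unique vector with G v^0 = p^0 and 1^T v^0 = 0. Then for any α > 0, the voltage vector v = α·1 + (1/α)·v^0 achieves the injection p = p^0 + (1/α²)·diag(v^0 (p^0)^T), i.e., p_i = p^0_i + (1/α²)·v^0_i·p^0_i. In particular, as α → ∞ the achievable injections approach p^0, so the boundary hyperplane {∑ p_i = 0} can be approached arbitrarily closely from above. -/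
open Matrix

/-- For a lossy network with `G = Re(Y)` a positive semidefinite
connected weighted graph Laplacian (`G·1 = 0`, kernel spanned by `1`), if
`p⁰` satisfies `1ᵀ p⁰ = 0` and `v⁰` satisfies `G v⁰ = p⁰`, `1ᵀ v⁰ = 0`, then for any
`α > 0` the (real) voltage vector `v = α·1 + (1/α)·v⁰` achieves the injection
`p_i = p⁰_i + (1/α²)·v⁰_i·p⁰_i`; hence the boundary hyperplane `{∑ p_i = 0}` can be
approached arbitrarily closely from above. -/
theorem lossy_boundary_approach
    (n : ℕ) (G : Matrix (Fin n) (Fin n) ℝ)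
    (hsym : G.IsSymm) (hpsd : G.PosSemidef)
    (hrow : G *ᵥ (fun _ => (1 : ℝ)) = 0)
    (hker : ∀ x : Fin n → ℝ, G *ᵥ x = 0 → ∃ c : ℝ, x = fun _ => c)
    (p0 v0 : Fin n → ℝ)
    (hp0 : ∑ i, p0 i = 0)
    (hv0 : G *ᵥ v0 = p0) (hv0sum : ∑ i, v0 i = 0)
    (α : ℝ) (hα : 0 < α)
    (v : Fin n → ℝ) (hv : v = α • (fun _ => (1 : ℝ)) + α⁻¹ • v0) :
    ∀ i : Fin n, v i * (G *ᵥ v) i = p0 i + (1 / α ^ 2) * (v0 i * p0 i) := by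
  intro i
  have hGv : G *ᵥ v = α⁻¹ • p0 := by
    rw [hv, Matrix.mulVec_add, Matrix.mulVec_smul, Matrix.mulVec_smul, hrow, hv0, smul_zero,
      zero_add]
  rw [hGv, hv]
  simp only [Pi.add_apply, Pi.smul_apply, smul_eq_mul, mul_one]
  field_simp
end

section
/- Let G be a connected tree on n vertices and let A be an n×n complex positive semidefinite matrix that fits G, meaning for i ≠ k, A_{ik} = 0 if and only if (i,k) is not an edge of G (diagonal entries unconstrained). Then rank(A) ≥ n - 1. -/
/-!
Every vector `x` in the kernel of `A` that vanishes at a vertex `i` also vanishes at each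
neighbour `j`; connectedness then makes the evaluation at a single vertex injective on the kernel,
so the nullity is at most one. For the neighbour step, let `S` be the side of the bridge `ij`
containing `j`. The only edge leaving `S` ends at `i`, where `x` vanishes, so `A` annihilates the
restriction `y` of `x` to `S` on `S`, hence `y⋆ A y = 0` and, `A` being positive semidefinite,
`A y = 0`. But `(A y) i = A i j * x j` with `A i j ≠ 0`.
-/

open ComplexOrder Matrix

theorem Matrix.PosSemidef.mulVec_indicator_eq_zero {𝕜 ι : Type*} [RCLike 𝕜] [Fintype ι]
    {A : Matrix ι ι 𝕜} (hA : A.PosSemidef) {x : ι → 𝕜} (hx : A *ᵥ x = 0) (S : Set ι)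
    (hS : ∀ k ∈ S, ∀ l ∉ S, A k l * x l = 0) : A *ᵥ S.indicator x = 0 := by
  have hS_eq : ∀ k ∈ S, (A *ᵥ S.indicator x) k = 0 := fun k hk => by
    refine (Finset.sum_congr rfl fun l _ => ?_).trans (congrFun hx k)
    by_cases hl : l ∈ S
    · rw [Set.indicator_of_mem hl]
    · rw [Set.indicator_of_notMem hl, mul_zero, hS k hk l hl]
  refine (hA.dotProduct_mulVec_zero_iff _).mp (Finset.sum_eq_zero fun k _ => ?_)
  by_cases hk : k ∈ S
  · rw [hS_eq k hk, mul_zero]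
  · rw [Pi.star_apply, Set.indicator_of_notMem hk, star_zero, zero_mul]

theorem Matrix.card_sub_one_le_rank {K m n : Type*} [Field K] [Fintype n]
    (A : Matrix m n K) (i : n) (h : ∀ x, A *ᵥ x = 0 → x i = 0 → x = 0) :
    Fintype.card n - 1 ≤ A.rank := by
  let eval_i : LinearMap.ker A.mulVecLin →ₗ[K] K :=
    (LinearMap.proj i).comp (LinearMap.ker A.mulVecLin).subtype
  have h_inj : Function.Injective eval_i := fun a b hab => by
    refine Subtype.ext (sub_eq_zero.mp (h _ ?_ (sub_eq_zero.mpr hab)))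
    rw [mulVec_sub, ← mulVecLin_apply, ← mulVecLin_apply, a.2, b.2, sub_zero]
  have h_ker : Module.finrank K (LinearMap.ker A.mulVecLin) ≤ 1 :=
    (LinearMap.finrank_le_finrank_of_injective h_inj).trans (Module.finrank_self K).le
  have h_dim := LinearMap.finrank_range_add_finrank_ker A.mulVecLin
  rw [Module.finrank_fintype_fun_eq_card] at h_dim
  rw [Matrix.rank]
  omega

namespace SimpleGraph

variable {V : Type*} {G : SimpleGraph V} {i j k l : V}

theorem IsBridge.eq_of_adj_of_reachable_of_not_reachable (hij : G.IsBridge s(i, j))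
    (hk : (G.deleteEdges {s(i, j)}).Reachable j k)
    (hl : ¬ (G.deleteEdges {s(i, j)}).Reachable j l) (hkl : G.Adj k l) : k = j ∧ l = i := by
  by_cases he : s(k, l) = s(i, j)
  · rcases Sym2.eq_iff.mp he with ⟨rfl, rfl⟩ | h
    · exact absurd hk.symm (isBridge_iff.mp hij)
    · exact h
  · exact absurd (hk.trans (Adj.reachable (by simpa [he] using hkl))) hl

theorem Connected.forall_of_adj_closed (hG : G.Connected) {p : V → Prop}
    (hp : ∀ ⦃u v⦄, G.Adj u v → p u → p v) (i : V) (hi : p i) (v : V) : p v := by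
  by_contra hv
  obtain ⟨d, -, hd, hd'⟩ := (hG i v).some.exists_boundary_dart {u | p u} hi hv
  exact hd' (hp d.adj hd)

end SimpleGraph

theorem Matrix.PosSemidef.apply_eq_zero_of_adj_of_mulVec_eq_zero {𝕜 V : Type*} [RCLike 𝕜]
    [Fintype V] {G : SimpleGraph V} {A : Matrix V V 𝕜} (hA : A.PosSemidef) (hacyclic : G.IsAcyclic)
    (hfit : ∀ i k : V, i ≠ k → (A i k ≠ 0 ↔ G.Adj i k)) {x : V → 𝕜} (hx : A *ᵥ x = 0)
    {i j : V} (hij : G.Adj i j) (hxi : x i = 0) : x j = 0 := by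
  have hbridge := SimpleGraph.isAcyclic_iff_forall_adj_isBridge.mp hacyclic hij
  set S : Set V := {k | (G.deleteEdges {s(i, j)}).Reachable j k}
  have hjS : j ∈ S := SimpleGraph.Reachable.refl j
  have hiS : i ∉ S := fun h => SimpleGraph.isBridge_iff.mp hbridge h.symm
  have hcross : ∀ k ∈ S, ∀ l ∉ S, A k l ≠ 0 → k = j ∧ l = i := fun k hk l hl hkl =>
    hbridge.eq_of_adj_of_reachable_of_not_reachable hk hl
      ((hfit k l (by rintro rfl; exact hl hk)).mp hkl)
  have hAy : A *ᵥ S.indicator x = 0 := hA.mulVec_indicator_eq_zero hx S fun k hk l hl => by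
    by_cases hkl : A k l = 0
    · rw [hkl, zero_mul]
    · rw [(hcross k hk l hl hkl).2, hxi, mul_zero]
  have hAy_i : (A *ᵥ S.indicator x) i = A i j * x j := by
    rw [mulVec, dotProduct, Finset.sum_eq_single j (fun l _ hlj => ?_) (by simp)]
    · rw [Set.indicator_of_mem hjS]
    · by_cases hl : l ∈ S
      · by_cases hil : A i l = 0
        · rw [hil, zero_mul]
        · have hli : A l i ≠ 0 := by
            rwa [← hA.isHermitian.apply l i, star_ne_zero]
          exact absurd (hcross l hl i hiS hli).1 hlj
      · rw [Set.indicator_of_notMem hl, mul_zero]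
  have hAij : A i j ≠ 0 := (hfit i j hij.ne).mpr hij
  simpa [hAy, hAij] using hAy_i.symm

/-- If `G` is a connected tree on `n` vertices and `A` is an `n × n`
complex positive semidefinite matrix that fits `G` (for `i ≠ k`, `A i k ≠ 0` iff
`(i,k)` is an edge of `G`), then `rank(A) ≥ n - 1`. -/
theorem rank_ge_of_fits_tree
    (n : ℕ) (G : SimpleGraph (Fin n))
    (hconn : G.Connected) (hacyclic : G.IsAcyclic)
    (A : Matrix (Fin n) (Fin n) ℂ)
    (hpsd : A.PosSemidef)
    (hfit : ∀ i k : Fin n, i ≠ k → (A i k ≠ 0 ↔ G.Adj i k)) :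
    n - 1 ≤ A.rank := by
  obtain ⟨i⟩ := hconn.nonempty
  have h_ker : ∀ x, A *ᵥ x = 0 → x i = 0 → x = 0 := fun x hx hxi => funext <|
    hconn.forall_of_adj_closed (p := fun k => x k = 0)
      (fun _ _ hadj => hpsd.apply_eq_zero_of_adj_of_mulVec_eq_zero hacyclic hfit hx hadj) i hxi
  simpa using A.card_sub_one_le_rank i h_ker
end

section
/- Let G be a cycle on n ≥ 3 vertices. Then every real symmetric positive semidefinite matrix that fits G has rank at least n - 2, and this bound is achieved: the minimum rank over real positive semidefinite matrices fitting G equals n - 2. -/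
section aux

lemma cycle_adj_iff (n : ℕ) (hn : 3 ≤ n) (u v : Fin n) :
    (SimpleGraph.cycleGraph n).Adj u v ↔
      (u.val + 1 = v.val ∨ v.val + 1 = u.val ∨ (u.val = 0 ∧ v.val = n - 1) ∨
        (v.val = 0 ∧ u.val = n - 1)) := by
  have hu := u.isLt
  have hv := v.isLt
  have key : ∀ a b : Fin n, (a - b).val = if b.val ≤ a.val then a.val - b.val
      else a.val + n - b.val := by
    intro a b
    rw [Fin.sub_def]
    simp only []
    rcases le_or_gt b.val a.val with h | h
    · rw [if_pos h]
      have : n - b.val + a.val = n + (a.val - b.val) := by omega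
      rw [this, Nat.add_mod_left, Nat.mod_eq_of_lt (by omega)]
    · rw [if_neg (by omega), Nat.mod_eq_of_lt (by omega)]
      omega
  rw [SimpleGraph.cycleGraph_adj', key, key]
  rcases lt_trichotomy u.val v.val with h | h | h
  · rw [if_neg (by omega), if_pos (by omega)]
    constructor <;> intro h' <;> omega
  · rw [if_pos (by omega), if_pos (by omega)]
    constructor <;> intro h' <;> omega
  · rw [if_pos (by omega), if_neg (by omega)]
    constructor <;> intro h' <;> omega

lemma rank_submatrix_le' {k m : ℕ} (A : Matrix (Fin m) (Fin m) ℝ)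
    (r c : Fin k → Fin m) : (A.submatrix r c).rank ≤ A.rank := by
  have h : A.submatrix r c =
      ((1 : Matrix (Fin m) (Fin m) ℝ).submatrix r id) *
        (A * ((1 : Matrix (Fin m) (Fin m) ℝ).submatrix id c)) := by
    ext a b
    simp [Matrix.mul_apply, Matrix.one_apply, ite_mul, mul_ite,
      Finset.sum_ite_eq, Finset.sum_ite_eq']
  rw [h]
  calc (((1 : Matrix (Fin m) (Fin m) ℝ).submatrix r id) *
        (A * ((1 : Matrix (Fin m) (Fin m) ℝ).submatrix id c))).rank
      ≤ (A * ((1 : Matrix (Fin m) (Fin m) ℝ).submatrix id c)).rank :=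
        (Matrix.rank_mul_le _ _).trans inf_le_right
    _ ≤ A.rank := (Matrix.rank_mul_le _ _).trans inf_le_left

lemma cycle_lower_bound (n : ℕ) (hn : 3 ≤ n) (A : Matrix (Fin n) (Fin n) ℝ)
    (hfit : ∀ i k : Fin n, i ≠ k → (A i k ≠ 0 ↔ (SimpleGraph.cycleGraph n).Adj i k)) :
    n - 2 ≤ A.rank := by
  set r : Fin (n - 2) → Fin n := fun a => ⟨a.val + 1, by omega⟩ with hr
  set c : Fin (n - 2) → Fin n := fun b => ⟨b.val + 2, by omega⟩ with hc
  set M : Matrix (Fin (n - 2)) (Fin (n - 2)) ℝ := A.submatrix r c with hM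
  have hzero : ∀ a b : Fin (n - 2), a < b → M a b = 0 := by
    intro a b hab
    have hab' : a.val < b.val := hab
    by_contra hne
    have hik : r a ≠ c b := by
      have h1 : (r a).val = a.val + 1 := rfl
      have h2 : (c b).val = b.val + 2 := rfl
      intro h; rw [h] at h1; omega
    have := (hfit (r a) (c b) hik).mp hne
    rw [cycle_adj_iff n hn] at this
    have h1 : (r a).val = a.val + 1 := rfl
    have h2 : (c b).val = b.val + 2 := rfl
    have hb := b.isLt
    omega
  have hdiag : ∀ a : Fin (n - 2), M a a ≠ 0 := by
    intro a
    have hik : r a ≠ c a := by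
      have h1 : (r a).val = a.val + 1 := rfl
      have h2 : (c a).val = a.val + 2 := rfl
      intro h; rw [h] at h1; omega
    rw [hM, Matrix.submatrix_apply, hfit (r a) (c a) hik, cycle_adj_iff n hn]
    have h1 : (r a).val = a.val + 1 := rfl
    have h2 : (c a).val = a.val + 2 := rfl
    omega
  have htri : M.BlockTriangular ⇑OrderDual.toDual := by
    intro a b h
    exact hzero a b h
  have hdet : M.det ≠ 0 := by
    rw [Matrix.det_of_lowerTriangular M htri]
    exact Finset.prod_ne_zero_iff.mpr fun a _ => hdiag a
  have hunit : IsUnit M := by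
    rwa [Matrix.isUnit_iff_isUnit_det, isUnit_iff_ne_zero]
  have hrankM : M.rank = n - 2 := by
    rw [Matrix.rank_of_isUnit M hunit, Fintype.card_fin]
  calc n - 2 = M.rank := hrankM.symm
    _ ≤ A.rank := rank_submatrix_le' A r c


/-- the Gram vectors: coordinate `j` of the vector attached to vertex `i`. -/
noncomputable def cvec (n : ℕ) (i : Fin n) (j : Fin (n - 2)) : ℝ :=
  if i.val = 0 then (if j.val = 0 then 1 else 0)
  else if i.val = n - 1 then (-1) ^ j.val
  else if i.val = n - 2 then (if j.val = n - 3 then 1 else 0)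
  else (if j.val = i.val - 1 ∨ j.val = i.val then 1 else 0)

lemma cvec_zero {n : ℕ} {i : Fin n} (h : i.val = 0) (j : Fin (n - 2)) :
    cvec n i j = if j.val = 0 then 1 else 0 := by
  rw [cvec, if_pos h]

lemma cvec_last {n : ℕ} (hn : 3 ≤ n) {i : Fin n} (h : i.val = n - 1) (j : Fin (n - 2)) :
    cvec n i j = (-1) ^ j.val := by
  rw [cvec, if_neg (by omega), if_pos h]

lemma cvec_pen {n : ℕ} (hn : 3 ≤ n) {i : Fin n} (h : i.val = n - 2) (j : Fin (n - 2)) :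
    cvec n i j = if j.val = n - 3 then 1 else 0 := by
  rw [cvec, if_neg (by omega), if_neg (by omega), if_pos h]

lemma cvec_mid {n : ℕ} {i : Fin n} (h1 : i.val ≠ 0) (h2 : i.val ≠ n - 1)
    (h3 : i.val ≠ n - 2) (j : Fin (n - 2)) :
    cvec n i j = if j.val = i.val - 1 ∨ j.val = i.val then 1 else 0 := by
  rw [cvec, if_neg h1, if_neg h2, if_neg h3]

lemma sum_ind {m : ℕ} (c : ℕ) (hc : c < m) (f : Fin m → ℝ) :
    ∑ j : Fin m, (if j.val = c then f j else 0) = f ⟨c, hc⟩ := by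
  rw [Finset.sum_eq_single (⟨c, hc⟩ : Fin m)]
  · simp
  · intro b _ hb
    rw [if_neg]
    exact fun h => hb (Fin.ext h)
  · intro h
    exact absurd (Finset.mem_univ _) h

lemma gram_spec_lt (n : ℕ) (hn : 3 ≤ n) (i k : Fin n) (hlt : i.val < k.val) :
    ((∑ j : Fin (n - 2), cvec n i j * cvec n k j) ≠ 0 ↔
      (SimpleGraph.cycleGraph n).Adj i k) := by
  have hkn := k.isLt
  have hin := i.isLt
  rw [cycle_adj_iff n hn]
  by_cases hk1 : k.val = n - 1
  · by_cases hi0 : i.val = 0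
    · -- i = 0, k = n-1 : sum = 1
      have hs : (∑ j : Fin (n - 2), cvec n i j * cvec n k j) = 1 := by
        have hrw : ∀ j : Fin (n - 2), cvec n i j * cvec n k j =
            if j.val = 0 then ((-1 : ℝ)) ^ j.val else 0 := by
          intro j
          rw [cvec_zero hi0, cvec_last hn hk1]
          split_ifs <;> ring1
        rw [Finset.sum_congr rfl fun j _ => hrw j, sum_ind 0 (by omega)]
        norm_num
      rw [hs]
      constructor
      · intro _; omega
      · intro _; norm_num
    · by_cases hi2 : i.val = n - 2
      · -- i = n-2, k = n-1 : sum = (-1)^(n-3)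
        have hs : (∑ j : Fin (n - 2), cvec n i j * cvec n k j) = (-1 : ℝ) ^ (n - 3) := by
          have hrw : ∀ j : Fin (n - 2), cvec n i j * cvec n k j =
              if j.val = n - 3 then ((-1 : ℝ)) ^ j.val else 0 := by
            intro j
            rw [cvec_pen hn hi2, cvec_last hn hk1]
            split_ifs <;> ring1
          rw [Finset.sum_congr rfl fun j _ => hrw j, sum_ind (n - 3) (by omega)]
        rw [hs]
        constructor
        · intro _; omega
        · intro _; exact pow_ne_zero _ (by norm_num)
      · -- generic i, k = n-1 : sum = 0, not adjacent
        have hi3 : i.val ≤ n - 3 := by omega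
        have hi1 : i.val ≠ n - 1 := by omega
        have hs : (∑ j : Fin (n - 2), cvec n i j * cvec n k j) = 0 := by
          have hrw : ∀ j : Fin (n - 2), cvec n i j * cvec n k j =
              (if j.val = i.val - 1 then ((-1 : ℝ)) ^ j.val else 0) +
              (if j.val = i.val then ((-1 : ℝ)) ^ j.val else 0) := by
            intro j
            rw [cvec_mid hi0 hi1 hi2, cvec_last hn hk1]
            split_ifs <;> first | ring1 | (exfalso; omega)
          rw [Finset.sum_congr rfl fun j _ => hrw j, Finset.sum_add_distrib,
            sum_ind (i.val - 1) (by omega), sum_ind i.val (by omega)]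
          simp only []
          obtain ⟨a, ha⟩ : ∃ a, i.val = a + 1 := ⟨i.val - 1, by omega⟩
          rw [ha]
          simp only [Nat.add_sub_cancel]
          rw [pow_succ]
          ring
        rw [hs]
        constructor
        · intro h; exact absurd rfl h
        · intro h; exfalso; omega
  · by_cases hk2 : k.val = n - 2
    · by_cases hi0 : i.val = 0
      · -- i = 0, k = n-2
        by_cases h3 : n = 3
        · have hs : (∑ j : Fin (n - 2), cvec n i j * cvec n k j) = 1 := by
            have hrw : ∀ j : Fin (n - 2), cvec n i j * cvec n k j =
                if j.val = 0 then (1 : ℝ) else 0 := by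
              intro j
              rw [cvec_zero hi0, cvec_pen hn hk2]
              split_ifs <;> first | ring1 | (exfalso; omega)
            rw [Finset.sum_congr rfl fun j _ => hrw j, sum_ind 0 (by omega)]
          rw [hs]
          constructor
          · intro _; omega
          · intro _; norm_num
        · have hs : (∑ j : Fin (n - 2), cvec n i j * cvec n k j) = 0 := by
            have hrw : ∀ j : Fin (n - 2), cvec n i j * cvec n k j = 0 := by
              intro j
              rw [cvec_zero hi0, cvec_pen hn hk2]
              split_ifs <;> first | ring1 | (exfalso; omega)
            rw [Finset.sum_congr rfl fun j _ => hrw j, Finset.sum_const_zero]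
          rw [hs]
          constructor
          · intro h; exact absurd rfl h
          · intro h; exfalso; omega
      · -- generic i, k = n-2
        have hi2 : i.val ≠ n - 2 := by omega
        have hi1 : i.val ≠ n - 1 := by omega
        by_cases hie : i.val = n - 3
        · have hs : (∑ j : Fin (n - 2), cvec n i j * cvec n k j) = 1 := by
            have hrw : ∀ j : Fin (n - 2), cvec n i j * cvec n k j =
                if j.val = n - 3 then (1 : ℝ) else 0 := by
              intro j
              rw [cvec_mid hi0 hi1 hi2, cvec_pen hn hk2]
              split_ifs <;> first | ring1 | (exfalso; omega)
            rw [Finset.sum_congr rfl fun j _ => hrw j, sum_ind (n - 3) (by omega)]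
          rw [hs]
          constructor
          · intro _; omega
          · intro _; norm_num
        · have hs : (∑ j : Fin (n - 2), cvec n i j * cvec n k j) = 0 := by
            have hrw : ∀ j : Fin (n - 2), cvec n i j * cvec n k j = 0 := by
              intro j
              rw [cvec_mid hi0 hi1 hi2, cvec_pen hn hk2]
              split_ifs <;> first | ring1 | (exfalso; omega)
            rw [Finset.sum_congr rfl fun j _ => hrw j, Finset.sum_const_zero]
          rw [hs]
          constructor
          · intro h; exact absurd rfl h
          · intro h; exfalso; omega
    · -- k ≤ n-3, k generic
      have hk0 : k.val ≠ 0 := by omega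
      by_cases hi0 : i.val = 0
      · by_cases hke : k.val = 1
        · have hs : (∑ j : Fin (n - 2), cvec n i j * cvec n k j) = 1 := by
            have hrw : ∀ j : Fin (n - 2), cvec n i j * cvec n k j =
                if j.val = 0 then (1 : ℝ) else 0 := by
              intro j
              rw [cvec_zero hi0, cvec_mid hk0 hk1 hk2]
              split_ifs <;> first | ring1 | (exfalso; omega)
            rw [Finset.sum_congr rfl fun j _ => hrw j, sum_ind 0 (by omega)]
          rw [hs]
          constructor
          · intro _; omega
          · intro _; norm_num
        · have hs : (∑ j : Fin (n - 2), cvec n i j * cvec n k j) = 0 := by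
            have hrw : ∀ j : Fin (n - 2), cvec n i j * cvec n k j = 0 := by
              intro j
              rw [cvec_zero hi0, cvec_mid hk0 hk1 hk2]
              split_ifs <;> first | ring1 | (exfalso; omega)
            rw [Finset.sum_congr rfl fun j _ => hrw j, Finset.sum_const_zero]
          rw [hs]
          constructor
          · intro h; exact absurd rfl h
          · intro h; exfalso; omega
      · -- generic i and k
        have hi2 : i.val ≠ n - 2 := by omega
        have hi1 : i.val ≠ n - 1 := by omega
        by_cases hke : k.val = i.val + 1
        · have hs : (∑ j : Fin (n - 2), cvec n i j * cvec n k j) = 1 := by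
            have hrw : ∀ j : Fin (n - 2), cvec n i j * cvec n k j =
                if j.val = i.val then (1 : ℝ) else 0 := by
              intro j
              rw [cvec_mid hi0 hi1 hi2, cvec_mid hk0 hk1 hk2]
              split_ifs <;> first | ring1 | (exfalso; omega)
            rw [Finset.sum_congr rfl fun j _ => hrw j, sum_ind i.val (by omega)]
          rw [hs]
          constructor
          · intro _; omega
          · intro _; norm_num
        · have hs : (∑ j : Fin (n - 2), cvec n i j * cvec n k j) = 0 := by
            have hrw : ∀ j : Fin (n - 2), cvec n i j * cvec n k j = 0 := by
              intro j
              rw [cvec_mid hi0 hi1 hi2, cvec_mid hk0 hk1 hk2]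
              split_ifs <;> first | ring1 | (exfalso; omega)
            rw [Finset.sum_congr rfl fun j _ => hrw j, Finset.sum_const_zero]
          rw [hs]
          constructor
          · intro h; exact absurd rfl h
          · intro h; exfalso; omega

lemma gram_spec (n : ℕ) (hn : 3 ≤ n) (i k : Fin n) (hik : i ≠ k) :
    ((∑ j : Fin (n - 2), cvec n i j * cvec n k j) ≠ 0 ↔
      (SimpleGraph.cycleGraph n).Adj i k) := by
  rcases lt_trichotomy i.val k.val with h | h | h
  · exact gram_spec_lt n hn i k h
  · exact absurd (Fin.ext h) hik
  · have := gram_spec_lt n hn k i h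
    rw [Finset.sum_congr rfl fun j _ => mul_comm (cvec n i j) (cvec n k j)]
    rw [this]
    exact ⟨SimpleGraph.Adj.symm, SimpleGraph.Adj.symm⟩

end aux

lemma cycle_upper (n : ℕ) (hn : 3 ≤ n) :
    ∃ A : Matrix (Fin n) (Fin n) ℝ, A.PosSemidef ∧
      (∀ i k : Fin n, i ≠ k → (A i k ≠ 0 ↔ (SimpleGraph.cycleGraph n).Adj i k)) ∧
      A.rank = n - 2 := by
  set B : Matrix (Fin (n - 2)) (Fin n) ℝ := Matrix.of fun j i => cvec n i j with hB
  refine ⟨B.conjTranspose * B, Matrix.posSemidef_conjTranspose_mul_self B, ?_, ?_⟩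
  · intro i k hik
    have hentry : (B.conjTranspose * B) i k = ∑ j : Fin (n - 2), cvec n i j * cvec n k j := by
      simp [Matrix.mul_apply, Matrix.conjTranspose_apply, hB]
    rw [hentry]
    exact gram_spec n hn i k hik
  · have hfit : ∀ i k : Fin n, i ≠ k →
        ((B.conjTranspose * B) i k ≠ 0 ↔ (SimpleGraph.cycleGraph n).Adj i k) := by
      intro i k hik
      have hentry : (B.conjTranspose * B) i k = ∑ j : Fin (n - 2), cvec n i j * cvec n k j := by
        simp [Matrix.mul_apply, Matrix.conjTranspose_apply, hB]
      rw [hentry]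
      exact gram_spec n hn i k hik
    refine le_antisymm ?_ (cycle_lower_bound n hn _ hfit)
    rw [Matrix.rank_conjTranspose_mul_self]
    exact (Matrix.rank_le_card_height B).trans (Fintype.card_fin _).le

/-- For the cycle graph `Cₙ` with `n ≥ 3`, every real symmetric positive
semidefinite matrix fitting `Cₙ` has rank at least `n - 2`, and this bound is
achieved: the minimum rank over real PSD matrices fitting `Cₙ` is exactly `n - 2`. -/
theorem minrank_psd_fitting_cycle
    (n : ℕ) (hn : 3 ≤ n) :
    (∀ A : Matrix (Fin n) (Fin n) ℝ, A.PosSemidef →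
      (∀ i k : Fin n, i ≠ k → (A i k ≠ 0 ↔ (SimpleGraph.cycleGraph n).Adj i k)) →
      n - 2 ≤ A.rank) ∧
    (∃ A : Matrix (Fin n) (Fin n) ℝ, A.PosSemidef ∧
      (∀ i k : Fin n, i ≠ k → (A i k ≠ 0 ↔ (SimpleGraph.cycleGraph n).Adj i k)) ∧
      A.rank = n - 2) := by
  exact ⟨fun A _ hfit => cycle_lower_bound n hn A hfit, cycle_upper n hn⟩
end

section
/- Let G be a graph on n vertices that is an odd cycle, and let A be an n×n complex positive semidefinite matrix that is lossless (all off-diagonal entries purely imaginary or zero) and fits G (for i ≠ k, A_{ik} ≠ 0 iff (i,k) is an edge of G). Then rank(A) ≥ n - 1. -/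
/-!
Let `v` be a kernel vector of `A`. The diagonal of `A` is real and the entries on the cycle are
nonzero and purely imaginary, so the row equation at vertex `k + 1`, multiplied by `I ^ k`, shows
that `Im (I ^ k * v k) = Re (I ^ k * v (k + 1)) = 0` propagates from `k` to `k + 1`. Once around
the cycle the twist has become `I ^ n = ± I` since `n` is odd, so both the real and imaginary
parts of every `v j` vanish as soon as `Im (v 0) = Re (v 1) = 0`. Hence `v ↦ (Im (v 0), Re (v 1))`
is a real-linear injection of `ker A` into `ℝ²`, so `ker A` has complex dimension at most one.
-/

open Complex ComplexOrder Matrix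

def Matrix.IsLossless {ι : Type*} (A : Matrix ι ι ℂ) : Prop :=
  ∀ i k, i ≠ k → (A i k).re = 0

def Matrix.Fits {ι R : Type*} [Zero R] (A : Matrix ι ι R) (G : SimpleGraph ι) : Prop :=
  ∀ i k, i ≠ k → (A i k ≠ 0 ↔ G.Adj i k)

theorem im_mul_eq_zero_of_three_term_relation {a d b u x y z : ℂ} (ha : a.re = 0)
    (hd : d.im = 0) (hb : b.re = 0) (hb₀ : b ≠ 0) (h : a * x + d * y + b * z = 0)
    (hx : (u * x).im = 0) (hy : (u * y).re = 0) : (u * z).im = 0 := by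
  have hb_im : b.im ≠ 0 := fun h' => hb₀ (Complex.ext hb h')
  have hre := congrArg re (congrArg (u * ·) h)
  have e : u * (a * x + d * y + b * z) = a * (u * x) + d * (u * y) + b * (u * z) := by ring
  simp only [e, add_re, mul_re, ha, hd, hb, hx, hy, mul_zero] at hre
  simpa [hb_im] using hre

theorem im_I_pow_mul_eq_zero_of_three_term_recurrence {w a d b : ℕ → ℂ}
    (ha : ∀ k, (a k).re = 0) (hd : ∀ k, (d k).im = 0) (hb : ∀ k, (b k).re = 0)
    (hb₀ : ∀ k, b k ≠ 0) (hrec : ∀ k, a k * w k + d k * w (k + 1) + b k * w (k + 2) = 0)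
    (h₀ : (w 0).im = 0) (h₁ : (w 1).re = 0) (k : ℕ) :
    (I ^ k * w k).im = 0 ∧ (I ^ k * w (k + 1)).re = 0 := by
  induction k with
  | zero => simpa using ⟨h₀, h₁⟩
  | succ k ih =>
    constructor
    · rw [pow_succ', mul_assoc, I_mul_im]
      exact ih.2
    · rw [pow_succ', mul_assoc, I_mul_re, neg_eq_zero]
      exact im_mul_eq_zero_of_three_term_relation (ha k) (hd k) (hb k) (hb₀ k) (hrec k) ih.1 ih.2

theorem eq_zero_of_im_I_pow_mul_eq_zero_of_odd {n : ℕ} (hodd : Odd n) {w : ℂ} (j : ℕ)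
    (h : (I ^ j * w).im = 0) (h' : (I ^ (j + n) * w).im = 0) : w = 0 := by
  obtain ⟨m, rfl⟩ := hodd
  have hpow : I ^ (j + (2 * m + 1)) * w = (-1) ^ m * I * (I ^ j * w) := by
    rw [pow_add, pow_succ, pow_mul, I_sq]; ring
  have hre : (I ^ j * w).re = 0 := by
    rw [hpow] at h'
    rcases neg_one_pow_eq_or ℂ m with hm | hm <;>
      simpa only [hm, one_mul, neg_one_mul, neg_mul, neg_im, I_mul_im, neg_eq_zero] using h'
  have hw : I ^ j * w = 0 := Complex.ext hre h
  simpa [I_ne_zero] using hw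

theorem finrank_complex_le_one_of_injective {V : Type*} [AddCommGroup V] [Module ℂ V]
    [Module ℝ V] [IsScalarTower ℝ ℂ V] {f : V →ₗ[ℝ] ℝ × ℝ} (hf : Function.Injective f) :
    Module.finrank ℂ V ≤ 1 := by
  have h := LinearMap.finrank_le_finrank_of_injective hf
  rw [Module.finrank_prod, Module.finrank_self, ← Module.finrank_mul_finrank ℝ ℂ V,
    Complex.finrank_real_complex] at h
  omega

section CycleGraph

open Fin.CommRing

variable {n : ℕ} [NeZero n]

theorem Fin.val_one_of_two_le (hn : 2 ≤ n) : (1 : Fin n).val = 1 := by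
  rw [Fin.val_one']
  exact Nat.mod_eq_of_lt hn

theorem Fin.add_one_ne_self (hn : 2 ≤ n) (i : Fin n) : i + 1 ≠ i := by
  rw [Ne, add_eq_left, Fin.ext_iff, Fin.val_one_of_two_le hn]
  simp

theorem Fin.sub_one_ne_add_one (hn : 3 ≤ n) (i : Fin n) : i - 1 ≠ i + 1 := by
  intro h
  have h₂ : ((2 : ℕ) : Fin n) = 0 :=
    calc ((2 : ℕ) : Fin n) = i + 1 - (i - 1) := by push_cast; ring
      _ = 0 := by rw [h, sub_self]
  rw [Fin.natCast_eq_zero] at h₂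
  have := Nat.le_of_dvd two_pos h₂
  omega

theorem SimpleGraph.cycleGraph_adj_iff_eq_sub_one_or_eq_add_one (hn : 2 ≤ n) {i j : Fin n} :
    (SimpleGraph.cycleGraph n).Adj i j ↔ j = i - 1 ∨ j = i + 1 := by
  rw [SimpleGraph.cycleGraph_adj', ← Fin.val_one_of_two_le hn, ← Fin.ext_iff, ← Fin.ext_iff,
    sub_eq_iff_eq_add', sub_eq_iff_eq_add', eq_sub_iff_add_eq, eq_comm (a := j + 1)]

theorem Matrix.mulVec_apply_eq_of_support_cycleGraph {R : Type*} [NonUnitalNonAssocSemiring R]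
    (hn : 3 ≤ n) {A : Matrix (Fin n) (Fin n) R}
    (hA : ∀ i j, i ≠ j → A i j ≠ 0 → (SimpleGraph.cycleGraph n).Adj i j) (v : Fin n → R)
    (i : Fin n) :
    (A *ᵥ v) i = A i (i - 1) * v (i - 1) + A i i * v i + A i (i + 1) * v (i + 1) := by
  have hsupp : ∀ j ∉ ({i - 1, i, i + 1} : Finset (Fin n)), A i j * v j = 0 := by
    intro j hj
    simp only [Finset.mem_insert, Finset.mem_singleton, not_or] at hj
    obtain ⟨hj₁, hj₂, hj₃⟩ := hj
    by_contra hne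
    have hadj := hA i j (Ne.symm hj₂) (left_ne_zero_of_mul hne)
    rw [SimpleGraph.cycleGraph_adj_iff_eq_sub_one_or_eq_add_one (by omega)] at hadj
    tauto
  have h₁ : i ≠ i + 1 := (Fin.add_one_ne_self (by omega) i).symm
  have h₂ : i - 1 ≠ i := fun h => Fin.add_one_ne_self (by omega) (i - 1) (by rw [sub_add_cancel, h])
  rw [mulVec_apply_eq_sum, ← Finset.sum_subset (Finset.subset_univ _) (fun j _ => hsupp j),
    Finset.sum_insert (by simp [h₂, Fin.sub_one_ne_add_one hn]), Finset.sum_pair h₁, add_assoc]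

theorem Matrix.eq_zero_of_mulVec_eq_zero_of_fits_odd_cycle (hn : 3 ≤ n) (hodd : Odd n)
    {A : Matrix (Fin n) (Fin n) ℂ} (hdiag : ∀ i, (A i i).im = 0) (hlossless : A.IsLossless)
    (hfit : A.Fits (SimpleGraph.cycleGraph n)) {v : Fin n → ℂ} (hv : A *ᵥ v = 0)
    (h₀ : (v 0).im = 0) (h₁ : (v 1).re = 0) : v = 0 := by
  have hrow (i : Fin n) :
      A i (i - 1) * v (i - 1) + A i i * v i + A i (i + 1) * v (i + 1) = 0 := by
    rw [← mulVec_apply_eq_of_support_cycleGraph hn (fun i k hik => (hfit i k hik).mp), hv,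
      Pi.zero_apply]
  have hne (i : Fin n) : i ≠ i + 1 := (Fin.add_one_ne_self (by omega) i).symm
  have hwalk := im_I_pow_mul_eq_zero_of_three_term_recurrence (w := fun k : ℕ => v k)
    (a := fun k => A (k + 1) k) (d := fun k => A (k + 1) (k + 1))
    (b := fun k => A (k + 1) (k + 1 + 1))
    (fun k => hlossless _ _ (Fin.add_one_ne_self (by omega) _)) (fun k => hdiag _)
    (fun k => hlossless _ _ (hne _))
    (fun k => (hfit _ _ (hne _)).mpr
      ((SimpleGraph.cycleGraph_adj_iff_eq_sub_one_or_eq_add_one (by omega)).mpr (Or.inr rfl)))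
    (fun k => by
      have hk : ((k + 2 : ℕ) : Fin n) = k + 1 + 1 := by push_cast; ring
      simpa only [add_sub_cancel_right, Nat.cast_succ, hk] using hrow (k + 1))
    (by simpa using h₀) (by simpa using h₁)
  funext j
  refine eq_zero_of_im_I_pow_mul_eq_zero_of_odd hodd j.val (by simpa using (hwalk j).1) ?_
  simpa using (hwalk (j + n)).1

end CycleGraph

theorem Matrix.finrank_ker_mulVecLin_le_one_of_fits_odd_cycle {n : ℕ} (hn : 3 ≤ n)
    (hodd : Odd n) {A : Matrix (Fin n) (Fin n) ℂ} (hdiag : ∀ i, (A i i).im = 0)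
    (hlossless : A.IsLossless) (hfit : A.Fits (SimpleGraph.cycleGraph n)) :
    Module.finrank ℂ (LinearMap.ker A.mulVecLin) ≤ 1 := by
  have : NeZero n := ⟨by omega⟩
  let f : LinearMap.ker A.mulVecLin →ₗ[ℝ] ℝ × ℝ :=
    ((imLm ∘ₗ LinearMap.proj 0).prod (reLm ∘ₗ LinearMap.proj 1)) ∘ₗ
      (LinearMap.ker A.mulVecLin).subtype.restrictScalars ℝ
  refine finrank_complex_le_one_of_injective (f := f) ((injective_iff_map_eq_zero f).mpr ?_)
  rintro ⟨v, hv⟩ hfv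
  simp only [f, LinearMap.coe_comp, LinearMap.coe_restrictScalars, Submodule.coe_subtype,
    Function.comp_apply, LinearMap.prod_apply, imLm_coe, LinearMap.coe_proj, reLm_coe,
    Function.prod_apply, Function.eval, Prod.mk_eq_zero] at hfv
  ext1
  exact eq_zero_of_mulVec_eq_zero_of_fits_odd_cycle hn hodd hdiag hlossless hfit hv hfv.1 hfv.2

/-- If `G` is an odd cycle on `n` vertices and `A` is an `n × n` complex
positive semidefinite lossless matrix (all off-diagonal entries purely imaginary or
zero) that fits `G`, then `rank(A) ≥ n - 1`. -/
theorem rank_ge_of_lossless_fits_odd_cycle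
    (n : ℕ) (hn : 3 ≤ n) (hodd : Odd n)
    (A : Matrix (Fin n) (Fin n) ℂ)
    (hpsd : A.PosSemidef)
    (hlossless : ∀ i k : Fin n, i ≠ k → (A i k).re = 0)
    (hfit : ∀ i k : Fin n, i ≠ k →
      (A i k ≠ 0 ↔ (SimpleGraph.cycleGraph n).Adj i k)) :
    n - 1 ≤ A.rank := by
  have hdiag (i : Fin n) : (A i i).im = 0 := conj_eq_iff_im.mp (hpsd.isHermitian.apply i i)
  have hker := finrank_ker_mulVecLin_le_one_of_fits_odd_cycle hn hodd hdiag hlossless hfit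
  have hrank := A.mulVecLin.finrank_range_add_finrank_ker
  rw [Module.finrank_fin_fun] at hrank
  rw [Matrix.rank]
  omega
end

section
/- Let K be a graph on n + m - 1 vertices obtained by 1-connecting graphs G (on n vertices) and H (on m vertices): K decomposes into induced subgraphs K_1 ≅ G on vertices {1,...,n} and K_2 ≅ H on vertices {n,...,n+m-1} sharing only vertex n, with no edges between {1,...,n-1} and {n+1,...,n+m-1}. Suppose every PSD matrix satisfying G has rank ≥ n-1 and every PSD matrix satisfying H has rank ≥ m-1 (where 'satisfying' means fitting the zero pattern and being purely imaginary on designated lossless edges). Then every PSD matrix A satisfying K has rank(A) ≥ n + m - 2. -/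
open ComplexOrder

/-- A Hermitian PSD matrix `A` *satisfies* a network given by an adjacency relation
`Adj` and a designation `Lossless` of lossless edges if, for `i ≠ k`, `A i k ≠ 0`
exactly when `(i,k)` is an edge, and `A i k` is purely imaginary whenever the edge
`(i,k)` is lossless. -/
def SatisfiesNetwork {N : ℕ} (A : Matrix (Fin N) (Fin N) ℂ)
    (Adj : Fin N → Fin N → Prop) (Lossless : Fin N → Fin N → Prop) : Prop :=
  ∀ i k : Fin N, i ≠ k →
    (A i k ≠ 0 ↔ Adj i k) ∧ (Lossless i k → (A i k).re = 0)

/-!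
Factor `A = Zᴴ Z`. Replacing the Gram vector of the cut vertex by its orthogonal projection onto
the span of the Gram vectors of the other vertices of one side changes no off-diagonal entry, so
it gives a PSD matrix satisfying that side's network whose rank is at most the rank of the
principal submatrix on that side without the cut vertex. Hence the principal submatrices of `A`
on `{0,…,n-1}` and on `{n+1,…,n+m}` have ranks at least `n` and `m`. Since there are no edges
between these two sets, together they form a block-diagonal principal submatrix of `A`, of rank
at least `n + m`.
-/

open Matrix Module

namespace Submodule

variable {K M M₂ : Type*} [DivisionRing K] [AddCommGroup M] [Module K M] [AddCommGroup M₂]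
  [Module K M₂]

theorem finrank_prod (p : Submodule K M) (q : Submodule K M₂) [FiniteDimensional K p]
    [FiniteDimensional K q] :
    finrank K (p.prod q) = finrank K p + finrank K q := by
  have hinj : Function.Injective (p.subtype.prodMap q.subtype) :=
    p.injective_subtype.prodMap q.injective_subtype
  rw [← Module.finrank_prod, ← LinearMap.finrank_range_of_inj hinj, LinearMap.range_prodMap,
    range_subtype, range_subtype]

end Submodule

namespace Matrix

section Field

variable {K m m' n n' : Type*} [Field K] [Fintype m'] [Fintype n']

theorem rank_fromBlocks_zero_zero (P : Matrix m m' K) (Q : Matrix n n' K) :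
    (fromBlocks P 0 0 Q).rank = P.rank + Q.rank := by
  have h : (fromBlocks P 0 0 Q).mulVecLin =
      (LinearEquiv.sumArrowLequivProdArrow m n K K).symm.toLinearMap ∘ₗ
        (P.mulVecLin.prodMap Q.mulVecLin) ∘ₗ
          (LinearEquiv.sumArrowLequivProdArrow m' n' K K).toLinearMap := by
    ext x i
    rcases i with i | i <;> simp [fromBlocks_mulVec] <;> rfl
  rw [rank, h, LinearMap.range_comp,
    LinearMap.range_comp_of_range_eq_top _ (LinearEquiv.range _), LinearEquiv.finrank_map_eq,
    LinearMap.range_prodMap, Submodule.finrank_prod]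
  rfl

end Field

section RCLike

variable {𝕜 ι κ : Type*} [RCLike 𝕜] [Fintype ι] [Fintype κ]

theorem range_mulVecLin_conjTranspose_mul_self (Y : Matrix ι κ 𝕜) :
    LinearMap.range (Yᴴ * Y).mulVecLin = LinearMap.range Yᴴ.mulVecLin := by
  refine Submodule.eq_of_le_of_finrank_eq ?_ ?_
  · rw [mulVecLin_mul]
    exact LinearMap.range_comp_le_range _ _
  · change (Yᴴ * Y).rank = Yᴴ.rank
    rw [rank_conjTranspose_mul_self, rank_conjTranspose]

theorem PosSemidef.exists_submatrix_mulVec_eq {A : Matrix ι ι 𝕜} (hA : A.PosSemidef)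
    (f : κ → ι) (j : ι) :
    ∃ c : κ → 𝕜, A.submatrix f f *ᵥ c = fun i => A (f i) j := by
  classical
  obtain ⟨Z, rfl⟩ : ∃ Z : Matrix ι ι 𝕜, A = Zᴴ * Z := by
    open scoped MatrixOrder Matrix.Norms.L2Operator in
    exact CStarAlgebra.nonneg_iff_eq_star_mul_self.mp hA.nonneg
  have hcol : (fun i => (Zᴴ * Z) (f i) j) ∈ LinearMap.range (Z.submatrix id f)ᴴ.mulVecLin :=
    ⟨Z.col j, by ext i; simp [mul_apply, mulVec, dotProduct]⟩
  rw [← range_mulVecLin_conjTranspose_mul_self] at hcol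
  obtain ⟨c, hc⟩ := hcol
  refine ⟨c, ?_⟩
  rw [← hc, mulVecLin_apply, conjTranspose_submatrix,
    submatrix_mul _ _ f id f Function.bijective_id]

theorem PosSemidef.exists_posSemidef_offDiag_eq_rank_le {ν : ℕ}
    {M : Matrix (Fin (ν + 1)) (Fin (ν + 1)) 𝕜} (hM : M.PosSemidef) (s : Fin (ν + 1)) :
    ∃ B : Matrix (Fin (ν + 1)) (Fin (ν + 1)) 𝕜, B.PosSemidef ∧
      (∀ k l, k ≠ l → B k l = M k l) ∧
      B.rank ≤ (M.submatrix s.succAbove s.succAbove).rank := by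
  set P := M.submatrix s.succAbove s.succAbove
  obtain ⟨c, hc⟩ := hM.exists_submatrix_mulVec_eq s.succAbove s
  -- `E` keeps the Gram vectors of the vertices other than `s` and replaces that of `s` by
  -- `∑ i, c i • z i`, its projection onto their span.
  let E : Matrix (Fin ν) (Fin (ν + 1)) 𝕜 :=
    of fun i => Fin.insertNth s (c i) ((1 : Matrix _ _ 𝕜) i)
  have hE : E.submatrix id s.succAbove = 1 := by ext i k; simp [E]
  have hEs : E.col s = c := by ext i; simp [E]
  have hB : (Eᴴ * P * E).submatrix s.succAbove id = P * E := by
    rw [submatrix_mul _ _ _ id _ Function.bijective_id,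
      submatrix_mul _ _ _ id _ Function.bijective_id, ← conjTranspose_submatrix, hE]
    simp
  have hPE' : (P * E).submatrix id s.succAbove = P := by
    rw [submatrix_mul _ _ id id _ Function.bijective_id, hE]
    simp
  have hPE : ∀ a l, (P * E) a l = M (s.succAbove a) l := fun a =>
    (Fin.forall_iff_succAbove s).2
      ⟨by rw [← congrFun hc a, ← hEs]; rfl, fun b => congrFun (congrFun hPE' a) b⟩
  have hrow : ∀ a l, a ≠ s → (Eᴴ * P * E) a l = M a l := by
    intro a l ha
    obtain ⟨a, rfl⟩ := Fin.exists_succAbove_eq ha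
    rw [← hPE, ← hB, submatrix_apply, id]
  refine ⟨Eᴴ * P * E, (hM.submatrix _).conjTranspose_mul_mul_same E, fun k l hkl => ?_,
    (rank_mul_le_left _ _).trans (rank_mul_le_right _ _)⟩
  by_cases hk : k = s
  · subst hk
    rw [← ((hM.submatrix _).conjTranspose_mul_mul_same E).isHermitian.apply,
      hrow l k (Ne.symm hkl), hM.isHermitian.apply]
  · exact hrow k l hk

theorem IsHermitian.rank_submatrix_add_rank_submatrix_le {κ' : Type*} [Fintype κ']
    {A : Matrix ι ι 𝕜} (hA : A.IsHermitian) (f : κ → ι) (g : κ' → ι)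
    (hfg : ∀ i j, A (f i) (g j) = 0) :
    (A.submatrix f f).rank + (A.submatrix g g).rank ≤ A.rank := by
  have hgf : ∀ j i, A (g j) (f i) = 0 := fun j i => by rw [← hA.apply, hfg, star_zero]
  have hblock : Matrix.fromBlocks (A.submatrix f f) 0 0 (A.submatrix g g) =
      A.submatrix (Sum.elim f g) (Sum.elim f g) := by
    ext (i | i) (j | j) <;> simp [hfg, hgf]
  rw [← rank_fromBlocks_zero_zero, hblock]
  exact rank_submatrix_le _ _ _

end RCLike

end Matrix

namespace SatisfiesNetwork

variable {N ν : ℕ} {A : Matrix (Fin N) (Fin N) ℂ} {Adj Lossless : Fin N → Fin N → Prop}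

theorem eq_zero_of_not_adj (hA : SatisfiesNetwork A Adj Lossless) {i k : Fin N} (hik : i ≠ k)
    (h : ¬ Adj i k) : A i k = 0 :=
  not_not.1 (mt (hA i k hik).1.1 h)

theorem of_offDiag_eq (hA : SatisfiesNetwork A Adj Lossless) {e : Fin ν → Fin N}
    (he : Function.Injective e) {B : Matrix (Fin ν) (Fin ν) ℂ}
    (hB : ∀ k l, k ≠ l → B k l = A (e k) (e l)) :
    SatisfiesNetwork B (fun k l => Adj (e k) (e l)) (fun k l => Lossless (e k) (e l)) :=
  fun k l hkl => hB k l hkl ▸ hA (e k) (e l) (he.ne hkl)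

theorem le_rank_submatrix_succAbove (hA : SatisfiesNetwork A Adj Lossless)
    (hApsd : A.PosSemidef) {e : Fin (ν + 1) → Fin N} (he : Function.Injective e) (r : ℕ)
    (hr : ∀ B : Matrix (Fin (ν + 1)) (Fin (ν + 1)) ℂ, B.PosSemidef →
      SatisfiesNetwork B (fun k l => Adj (e k) (e l)) (fun k l => Lossless (e k) (e l)) →
        r ≤ B.rank)
    (s : Fin (ν + 1)) :
    r ≤ (A.submatrix (e ∘ s.succAbove) (e ∘ s.succAbove)).rank := by
  obtain ⟨B, hBpsd, hBA, hBrank⟩ := (hApsd.submatrix e).exists_posSemidef_offDiag_eq_rank_le s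
  exact (hr B hBpsd (hA.of_offDiag_eq he hBA)).trans hBrank

end SatisfiesNetwork

theorem rank_ge_of_one_connection_general
    (n m : ℕ)
    (Adj Lossless : Fin (n + m + 1) → Fin (n + m + 1) → Prop)
    (hsplit : ∀ i k : Fin (n + m + 1), i.val < n → n < k.val → ¬ Adj i k)
    (eG : Fin (n + 1) → Fin (n + m + 1)) (heG : ∀ i, (eG i).val = i.val)
    (eH : Fin (m + 1) → Fin (n + m + 1)) (heH : ∀ j, (eH j).val = n + j.val)
    (hG : ∀ B : Matrix (Fin (n + 1)) (Fin (n + 1)) ℂ, B.PosSemidef →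
      SatisfiesNetwork B (fun i k => Adj (eG i) (eG k))
        (fun i k => Lossless (eG i) (eG k)) → n ≤ B.rank)
    (hH : ∀ B : Matrix (Fin (m + 1)) (Fin (m + 1)) ℂ, B.PosSemidef →
      SatisfiesNetwork B (fun i k => Adj (eH i) (eH k))
        (fun i k => Lossless (eH i) (eH k)) → m ≤ B.rank)
    (A : Matrix (Fin (n + m + 1)) (Fin (n + m + 1)) ℂ)
    (hApsd : A.PosSemidef)
    (hAsat : SatisfiesNetwork A Adj Lossless) :
    n + m ≤ A.rank := by
  have heG_inj : Function.Injective eG := fun a b h => Fin.ext <| by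
    simpa [heG] using congrArg Fin.val h
  have heH_inj : Function.Injective eH := fun a b h => Fin.ext <| by
    simpa [heH] using congrArg Fin.val h
  have hGrank := hAsat.le_rank_submatrix_succAbove hApsd heG_inj n hG (Fin.last n)
  have hHrank := hAsat.le_rank_submatrix_succAbove hApsd heH_inj m hH 0
  have hcross :
      ∀ i j, A ((eG ∘ (Fin.last n).succAbove) i) ((eH ∘ Fin.succAbove 0) j) = 0 := by
    intro i j
    have hi : ((eG ∘ (Fin.last n).succAbove) i).val < n := by simp [heG]
    have hj : n < ((eH ∘ Fin.succAbove 0) j).val := by simp [heH]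
    exact hAsat.eq_zero_of_not_adj (Fin.ne_of_lt (Fin.lt_def.2 (hi.trans hj)))
      (hsplit _ _ hi hj)
  exact (add_le_add hGrank hHrank).trans
    (hApsd.isHermitian.rank_submatrix_add_rank_submatrix_le _ _ hcross)

/-- Rank bound for 1-connections. Here `K` is a network on
`n + m + 1` vertices obtained by 1-connecting a network `G` on the first `n + 1`
vertices `{0,…,n}` and a network `H` on the last `m + 1` vertices `{n,…,n+m}`,
sharing only the vertex `n` and with no edges between `{0,…,n-1}` and
`{n+1,…,n+m}`. If every PSD matrix satisfying `G` has rank ≥ `n` (that is,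
`(n+1) - 1`) and every PSD matrix satisfying `H` has rank ≥ `m`, then every PSD
matrix `A` satisfying `K` has rank ≥ `n + m` (that is, `(n+1) + (m+1) - 2`). -/
theorem rank_ge_of_one_connection
    (n m : ℕ)
    (Adj Lossless : Fin (n + m + 1) → Fin (n + m + 1) → Prop)
    (hAdjSymm : ∀ i k, Adj i k → Adj k i)
    (hAdjIrrefl : ∀ i, ¬ Adj i i)
    (hsplit : ∀ i k : Fin (n + m + 1), i.val < n → n < k.val → ¬ Adj i k)
    (eG : Fin (n + 1) → Fin (n + m + 1)) (heG : ∀ i, (eG i).val = i.val)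
    (eH : Fin (m + 1) → Fin (n + m + 1)) (heH : ∀ j, (eH j).val = n + j.val)
    (hG : ∀ B : Matrix (Fin (n + 1)) (Fin (n + 1)) ℂ, B.PosSemidef →
      SatisfiesNetwork B (fun i k => Adj (eG i) (eG k))
        (fun i k => Lossless (eG i) (eG k)) → n ≤ B.rank)
    (hH : ∀ B : Matrix (Fin (m + 1)) (Fin (m + 1)) ℂ, B.PosSemidef →
      SatisfiesNetwork B (fun i k => Adj (eH i) (eH k))
        (fun i k => Lossless (eH i) (eH k)) → m ≤ B.rank)
    (A : Matrix (Fin (n + m + 1)) (Fin (n + m + 1)) ℂ)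
    (hApsd : A.PosSemidef)
    (hAsat : SatisfiesNetwork A Adj Lossless) :
    n + m ≤ A.rank :=
  rank_ge_of_one_connection_general n m Adj Lossless hsplit eG heG eH heH hG hH A hApsd hAsat
end
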